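/- arXiv:math/0605213 — 7 statements merged into one kernel-verified Lean document; each statement's English description precedes it below -/
import Mathlib

section
/- Let G be a simple graph that is a tree, and let v₀, u, v be vertices of G. If p is the path in G from u to v, q is the path from v₀ to u, and r is the path from v₀ to v, then there is exactly one vertex w of G lying on all three paths p, q, r (i.e. belonging to the supports of p, q and r). -/
private lemma aux_isPath_append {V : Type*} {G : SimpleGraph V} {a b c : V}
    {p : G.Walk a b} {q : G.Walk b c} (hp : p.IsPath) (hq : q.IsPath)
    (hint : ∀ x, x ∈ p.support → x ∈ q.support → x = b) : (p.append q).IsPath := by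
  rw [SimpleGraph.Walk.isPath_def, SimpleGraph.Walk.support_append]
  refine List.Nodup.append hp.support_nodup ?_ ?_
  · have h := hq.support_nodup
    rw [q.support_eq_cons] at h
    exact (List.nodup_cons.mp h).2
  · intro x hxp hxq
    have hx : x ∈ q.support := List.mem_of_mem_tail hxq
    have hxb := hint x hxp hx
    subst hxb
    have h := hq.support_nodup
    rw [q.support_eq_cons] at h
    exact (List.nodup_cons.mp h).1 hxq

private lemma aux_exists_first {V : Type*} {G : SimpleGraph V} {a b : V} (S : Set V)
    (p : G.Walk a b) (hb : b ∈ S) :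
    ∃ (w : V) (q1 : G.Walk a w) (q2 : G.Walk w b),
      p = q1.append q2 ∧ w ∈ S ∧ ∀ x ∈ q1.support, x ∈ S → x = w := by
  classical
  induction p with
  | nil => exact ⟨_, SimpleGraph.Walk.nil, SimpleGraph.Walk.nil, rfl, hb, by simp⟩
  | @cons x y z h p ih =>
    by_cases hx : x ∈ S
    · exact ⟨x, SimpleGraph.Walk.nil, SimpleGraph.Walk.cons h p, by simp, hx, by simp⟩
    · obtain ⟨w, q1, q2, heq, hw, hfirst⟩ := ih hb
      refine ⟨w, SimpleGraph.Walk.cons h q1, q2, by rw [SimpleGraph.Walk.cons_append, heq],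
        hw, ?_⟩
      intro t ht htS
      rw [SimpleGraph.Walk.support_cons, List.mem_cons] at ht
      rcases ht with rfl | ht
      · exact absurd htS hx
      · exact hfirst t ht htS

/-- In a tree, given vertices `v₀, u, v`, the path from `u` to `v`, the path from `v₀` to `u`
and the path from `v₀` to `v` have exactly one common vertex. -/
theorem stmt_0 {V : Type*} {G : SimpleGraph V} (hG : G.IsTree) (v₀ u v : V)
    (p : G.Walk u v) (hp : p.IsPath)
    (q : G.Walk v₀ u) (hq : q.IsPath)
    (r : G.Walk v₀ v) (hr : r.IsPath) :
    ∃! w : V, w ∈ p.support ∧ w ∈ q.support ∧ w ∈ r.support := by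
  classical
  have hacyc := hG.IsAcyclic
  obtain ⟨w, r1, r2, hre, hwS, hfirst⟩ :=
    aux_exists_first {x | x ∈ p.support} r (by simp [p.end_mem_support])
  have hwp : w ∈ p.support := hwS
  have hr1 : r1.IsPath := by rw [hre] at hr; exact hr.of_append_left
  have hr2 : r2.IsPath := by rw [hre] at hr; exact hr.of_append_right
  set p1 := p.takeUntil w hwp with hp1def
  set p2 := p.dropUntil w hwp with hp2def
  have hp1 : p1.IsPath := hp.takeUntil hwp
  have hp2 : p2.IsPath := hp.dropUntil hwp
  have hpsplit : p1.append p2 = p := p.take_spec hwp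
  have hp2r2 : p2 = r2 := by
    have h := hacyc.path_unique ⟨p2, hp2⟩ ⟨r2, hr2⟩
    exact congrArg Subtype.val h
  have hc : (r1.append p1.reverse).IsPath := by
    refine aux_isPath_append hr1 hp1.reverse ?_
    intro x hx1 hx2
    rw [SimpleGraph.Walk.support_reverse, List.mem_reverse] at hx2
    exact hfirst x hx1 (SimpleGraph.Walk.support_takeUntil_subset p hwp hx2)
  have hqc : q = r1.append p1.reverse := by
    have h := hacyc.path_unique ⟨q, hq⟩ ⟨_, hc⟩
    exact congrArg Subtype.val h
  refine ⟨w, ⟨hwp, ?_, ?_⟩, ?_⟩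
  · rw [hqc, SimpleGraph.Walk.mem_support_append_iff]
    exact Or.inl r1.end_mem_support
  · rw [hre, SimpleGraph.Walk.mem_support_append_iff]
    exact Or.inl r1.end_mem_support
  · rintro w' ⟨hw'p, hw'q, hw'r⟩
    have hcase : w' ∈ r1.support → w' = w := fun h => hfirst w' h hw'p
    rw [hre, SimpleGraph.Walk.mem_support_append_iff] at hw'r
    rcases hw'r with h1 | h2
    · exact hcase h1
    · rw [hqc, SimpleGraph.Walk.mem_support_append_iff] at hw'q
      rcases hw'q with h1 | h1
      · exact hcase h1
      · rw [SimpleGraph.Walk.support_reverse, List.mem_reverse] at h1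
        -- w' ∈ p1.support and w' ∈ p2.support (since p2 = r2)
        have hw'p2 : w' ∈ p2.support := by rw [hp2r2]; exact h2
        rw [p2.support_eq_cons, List.mem_cons] at hw'p2
        rcases hw'p2 with rfl | hw'tail
        · rfl
        · exfalso
          have hnd := hp.support_nodup
          rw [← hpsplit, SimpleGraph.Walk.support_append] at hnd
          exact (List.disjoint_of_nodup_append hnd) h1 hw'tail
end

section
/- Let A be an abelian group, T = A ⊗_ℤ A, let N ⊆ T be the subgroup generated by all elements a⊗b + b⊗a (a, b ∈ A), and let M ⊆ T be the subgroup generated by all elements a⊗a (a ∈ A); note N ⊆ M. Write ⊗̂²A = T/N and ∧²A = T/M. Then: (i) the assignment a ↦ (class of a⊗a in ⊗̂²A) induces a well-defined group homomorphism τ̄ : A/2A → ⊗̂²A; (ii) τ̄ is injective; (iii) the image of τ̄ equals the kernel of the canonical projection ⊗̂²A → ∧²A. In other words the sequence 0 → A⊗ℤ/2 → ⊗̂²A → ∧²A → 0 is exact. -/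
open scoped TensorProduct

noncomputable section

/-- The subgroup of `A ⊗ A` generated by the elements `a ⊗ b + b ⊗ a`. -/
def symSub (A : Type*) [AddCommGroup A] : AddSubgroup (TensorProduct ℤ A A) :=
  AddSubgroup.closure {x | ∃ a b : A, x = a ⊗ₜ[ℤ] b + b ⊗ₜ[ℤ] a}

/-- The subgroup of `A ⊗ A` generated by the elements `a ⊗ a`. -/
def diagSub (A : Type*) [AddCommGroup A] : AddSubgroup (TensorProduct ℤ A A) :=
  AddSubgroup.closure {x | ∃ a : A, x = a ⊗ₜ[ℤ] a}

/-- The subgroup `2A` of `A`. -/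
def twoSub (A : Type*) [AddCommGroup A] : AddSubgroup A :=
  AddSubgroup.closure {x | ∃ a : A, x = a + a}

section Aux

variable {A : Type*} [AddCommGroup A]

lemma tensor_sq_add (a b : A) :
    (a + b) ⊗ₜ[ℤ] (a + b) = a ⊗ₜ[ℤ] a + (a ⊗ₜ[ℤ] b + b ⊗ₜ[ℤ] a) + b ⊗ₜ[ℤ] b := by
  rw [TensorProduct.tmul_add, TensorProduct.add_tmul, TensorProduct.add_tmul]
  abel

lemma sym_mem (a b : A) : a ⊗ₜ[ℤ] b + b ⊗ₜ[ℤ] a ∈ symSub A :=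
  AddSubgroup.subset_closure ⟨a, b, rfl⟩

/-- The additive homomorphism `a ↦ [a ⊗ a]` into `(A⊗A)/N`. -/
def tauHom (A : Type*) [AddCommGroup A] :
    A →+ (TensorProduct ℤ A A) ⧸ symSub A where
  toFun a := QuotientAddGroup.mk (a ⊗ₜ[ℤ] a)
  map_zero' := by simp
  map_add' a b := by
    have h0 : (QuotientAddGroup.mk (a ⊗ₜ[ℤ] b + b ⊗ₜ[ℤ] a) :
        (TensorProduct ℤ A A) ⧸ symSub A) = 0 :=
      (QuotientAddGroup.eq_zero_iff _).mpr (sym_mem a b)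
    show (QuotientAddGroup.mk ((a + b) ⊗ₜ[ℤ] (a + b)) :
        (TensorProduct ℤ A A) ⧸ symSub A) = _
    rw [tensor_sq_add]
    rw [QuotientAddGroup.mk_add, QuotientAddGroup.mk_add, h0, add_zero]

lemma twoSub_le_ker : twoSub A ≤ (tauHom A).ker := by
  rw [twoSub]
  refine (AddSubgroup.closure_le _).mpr ?_
  rintro x ⟨a, rfl⟩
  have : (a + a) ⊗ₜ[ℤ] (a + a)
      = (a ⊗ₜ[ℤ] a + a ⊗ₜ[ℤ] a) + (a ⊗ₜ[ℤ] a + a ⊗ₜ[ℤ] a) := by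
    rw [tensor_sq_add]; abel
  have hm : (a + a) ⊗ₜ[ℤ] (a + a) ∈ symSub A := by
    rw [this]; exact add_mem (sym_mem a a) (sym_mem a a)
  simp only [AddMonoidHom.mem_ker, tauHom, AddMonoidHom.coe_mk, ZeroHom.coe_mk]
  exact (QuotientAddGroup.eq_zero_iff _).mpr hm

lemma symSub_le_diagSub : symSub A ≤ diagSub A := by
  rw [symSub]
  refine (AddSubgroup.closure_le _).mpr ?_
  rintro x ⟨a, b, rfl⟩
  have key : a ⊗ₜ[ℤ] b + b ⊗ₜ[ℤ] a
      = (a + b) ⊗ₜ[ℤ] (a + b) - a ⊗ₜ[ℤ] a - b ⊗ₜ[ℤ] b := by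
    rw [tensor_sq_add]; abel
  rw [key]
  exact sub_mem (sub_mem (AddSubgroup.subset_closure ⟨a + b, rfl⟩)
    (AddSubgroup.subset_closure ⟨a, rfl⟩)) (AddSubgroup.subset_closure ⟨b, rfl⟩)

end Aux

/-- The sequence `0 → A ⊗ ℤ/2 → ⊗̂²A → ∧²A → 0` is exact: the assignment
`a ↦ a ⊗̂ a` gives a well-defined injective homomorphism `τ̄ : A/2A → ⊗̂²A = (A⊗A)/N`
whose image is the kernel of the canonical projection `⊗̂²A → ∧²A = (A⊗A)/M`. -/
theorem stmt_4 {A : Type*} [AddCommGroup A] :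
    ∃ (τ : A ⧸ twoSub A →+ (TensorProduct ℤ A A) ⧸ symSub A)
      (π : ((TensorProduct ℤ A A) ⧸ symSub A) →+ ((TensorProduct ℤ A A) ⧸ diagSub A)),
      (∀ a : A, τ (QuotientAddGroup.mk a) = QuotientAddGroup.mk (a ⊗ₜ[ℤ] a)) ∧
      (∀ x : TensorProduct ℤ A A,
          π (QuotientAddGroup.mk x) = QuotientAddGroup.mk x) ∧
      Function.Injective τ ∧
      τ.range = π.ker := by
  classical
  set τ : A ⧸ twoSub A →+ (TensorProduct ℤ A A) ⧸ symSub A :=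
    QuotientAddGroup.lift (twoSub A) (tauHom A) (fun x hx => twoSub_le_ker hx) with hτ
  set π : ((TensorProduct ℤ A A) ⧸ symSub A) →+ ((TensorProduct ℤ A A) ⧸ diagSub A) :=
    QuotientAddGroup.lift (symSub A) (QuotientAddGroup.mk' (diagSub A))
      (fun x hx => (QuotientAddGroup.eq_zero_iff _).mpr (symSub_le_diagSub hx)) with hπ
  have hτa : ∀ a : A, τ (QuotientAddGroup.mk a) = QuotientAddGroup.mk (a ⊗ₜ[ℤ] a) :=
    fun a => rfl
  have hπx : ∀ x : TensorProduct ℤ A A,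
      π (QuotientAddGroup.mk x) = QuotientAddGroup.mk x := fun x => rfl
  refine ⟨τ, π, hτa, hπx, ?_, ?_⟩
  · -- injectivity
    rw [injective_iff_map_eq_zero]
    intro q hq
    obtain ⟨a, rfl⟩ := QuotientAddGroup.mk_surjective q
    rw [hτa] at hq
    have haN : a ⊗ₜ[ℤ] a ∈ symSub A := (QuotientAddGroup.eq_zero_iff _).mp hq
    rw [QuotientAddGroup.eq_zero_iff]
    by_contra ha
    -- set up the `ZMod 2` vector space `A / 2A`
    letI : Module (ZMod 2) (A ⧸ twoSub A) := AddCommGroup.zmodModule (by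
      intro x
      obtain ⟨a, rfl⟩ := QuotientAddGroup.mk_surjective x
      have : ((2 : ℕ) • QuotientAddGroup.mk a : A ⧸ twoSub A)
          = QuotientAddGroup.mk ((2 : ℕ) • a) := rfl
      rw [this, QuotientAddGroup.eq_zero_iff, two_nsmul]
      exact AddSubgroup.subset_closure ⟨a, rfl⟩)
    have hne : (QuotientAddGroup.mk a : A ⧸ twoSub A) ≠ 0 := by
      rw [Ne, QuotientAddGroup.eq_zero_iff]; exact ha
    haveI : Fact (Nat.Prime 2) := ⟨Nat.prime_two⟩
    obtain ⟨χ, hχ⟩ : ∃ φ : Module.Dual (ZMod 2) (A ⧸ twoSub A),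
        φ (QuotientAddGroup.mk a) ≠ 0 := by
      by_contra h
      push_neg at h
      exact hne ((Module.forall_dual_apply_eq_zero_iff (ZMod 2) _).mp h)
    -- the linear functional on A
    set c : A →ₗ[ℤ] ZMod 2 :=
      (χ.toAddMonoidHom.comp (QuotientAddGroup.mk' (twoSub A))).toIntLinearMap with hc
    have hcval : ∀ x : A, c x = χ (QuotientAddGroup.mk x) := fun x => rfl
    set B : TensorProduct ℤ A A →ₗ[ℤ] ZMod 2 :=
      TensorProduct.lift (LinearMap.mk₂ ℤ (fun x y => c x * c y)
        (fun x x' y => by simp only [map_add, add_mul])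
        (fun r x y => by simp only [map_smul, smul_mul_assoc])
        (fun x y y' => by simp only [map_add, mul_add])
        (fun r x y => by simp only [map_smul, mul_smul_comm])) with hB
    have hBt : ∀ x y : A, B (x ⊗ₜ[ℤ] y) = c x * c y := fun x y => rfl
    have h2 : ∀ z : ZMod 2, z + z = 0 := by
      intro z
      rw [← two_mul]
      exact mul_eq_zero_of_left rfl z
    have hker : symSub A ≤ B.toAddMonoidHom.ker := by
      rw [symSub]
      refine (AddSubgroup.closure_le _).mpr ?_
      rintro x ⟨u, v, rfl⟩
      refine AddMonoidHom.mem_ker.mpr ?_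
      show B (u ⊗ₜ[ℤ] v + v ⊗ₜ[ℤ] u) = 0
      rw [map_add, hBt, hBt, mul_comm (c v) (c u), h2]
    have : B (a ⊗ₜ[ℤ] a) = 0 := hker haN
    rw [hBt, hcval] at this
    exact hχ (by
      have := mul_eq_zero.mp this
      rcases this with h | h <;> exact h)
  · -- range = ker
    ext q
    simp only [AddMonoidHom.mem_range, AddMonoidHom.mem_ker]
    constructor
    · rintro ⟨y, rfl⟩
      obtain ⟨a, rfl⟩ := QuotientAddGroup.mk_surjective y
      rw [hτa, hπx, QuotientAddGroup.eq_zero_iff]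
      exact AddSubgroup.subset_closure ⟨a, rfl⟩
    · intro hq
      obtain ⟨x, rfl⟩ := QuotientAddGroup.mk_surjective q
      rw [hπx, QuotientAddGroup.eq_zero_iff] at hq
      -- x ∈ diagSub, show mk x ∈ range τ
      have key : diagSub A ≤
          (τ.range.comap (QuotientAddGroup.mk' (symSub A))) := by
        rw [diagSub]
        refine (AddSubgroup.closure_le _).mpr ?_
        rintro y ⟨a, rfl⟩
        exact AddSubgroup.mem_comap.mpr
          (AddMonoidHom.mem_range.mpr ⟨QuotientAddGroup.mk a, hτa a⟩)
      exact AddSubgroup.mem_comap.mp (key hq)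
end
end

section
/- Let C be a preadditive category with binary biproducts, B an abelian category, and F : C → B a quadratic functor. For objects X, Y of C, let i₁, i₂, p₁, p₂ be the biproduct inclusions and projections of X ⊕ Y, and let F(X|Y) be the image in B of the endomorphism [i₁p₁, i₂p₂] := F(i₁p₁ + i₂p₂) − F(i₁p₁) − F(i₂p₂) of F(X ⊕ Y). Then there is an isomorphism F(X) ⊕ F(X|Y) ⊕ F(Y) ≅ F(X ⊕ Y). -/
open CategoryTheory CategoryTheory.Limits

/-- A functor between preadditive categories is quadratic if the deviation
`[f,g] := F(f+g) − F(f) − F(g)` is biadditive in `f` and `g` (by symmetry of the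
deviation it suffices to require additivity in the first variable). -/
def IsQuadraticFunctor {C : Type*} [Category C] [Preadditive C]
    {D : Type*} [Category D] [Preadditive D] (F : C ⥤ D) : Prop :=
  ∀ ⦃X Y : C⦄ (f g h : X ⟶ Y),
    F.map (f + g + h) - F.map (f + g) - F.map h =
      (F.map (f + h) - F.map f - F.map h) + (F.map (g + h) - F.map g - F.map h)

/-- The endomorphism `[i₁p₁, i₂p₂] = F(i₁p₁ + i₂p₂) − F(i₁p₁) − F(i₂p₂)` of `F(X ⊕ Y)`,
whose image is the quadratic crossed effect `F(X|Y)`. -/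
noncomputable def crossedDeviation {C : Type*} [Category C] [Preadditive C] [HasBinaryBiproducts C]
    {D : Type*} [Category D] [Preadditive D] (F : C ⥤ D) (X Y : C) :
    F.obj (X ⊞ Y) ⟶ F.obj (X ⊞ Y) :=
  F.map (biprod.fst ≫ biprod.inl + biprod.snd ≫ biprod.inr)
    - F.map (biprod.fst ≫ biprod.inl) - F.map (biprod.snd ≫ biprod.inr)

/-!
Since a quadratic functor sends `0` to `0`, `F(i₁p₁)` and `F(i₂p₂)` are orthogonal idempotents
of `F(X ⊕ Y)` splitting off `F(X)` and `F(Y)`, and `[i₁p₁, i₂p₂] = 1 - F(i₁p₁) - F(i₂p₂)` is the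
complementary idempotent; its image is the remaining summand.
-/

section QuadraticFunctor

variable {C : Type*} [Category C] [Preadditive C] {D : Type*} [Category D] [Preadditive D]
  {F : C ⥤ D}

/-- Taking `f = g = h = 0` in the quadratic identity gives `-F(0) = -F(0) - F(0)`. -/
theorem IsQuadraticFunctor.preservesZeroMorphisms (hF : IsQuadraticFunctor F) :
    F.PreservesZeroMorphisms where
  map_zero X Y := by
    have h := hF (0 : X ⟶ Y) 0 0
    simp only [add_zero, sub_self, zero_sub] at h
    simpa using h

end QuadraticFunctor

section ComplementaryIdempotent

variable {B : Type*} [Category B] [Preadditive B] [HasBinaryBiproducts B] [HasImages B]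
  [HasEqualizers B] {Z A A' : B} (i₁ : A ⟶ Z) (p₁ : Z ⟶ A) (i₂ : A' ⟶ Z) (p₂ : Z ⟶ A')

noncomputable def biprodImageComplementIso (h₁₁ : i₁ ≫ p₁ = 𝟙 A) (h₁₂ : i₁ ≫ p₂ = 0)
    (h₂₁ : i₂ ≫ p₁ = 0) (h₂₂ : i₂ ≫ p₂ = 𝟙 A') :
    A ⊞ (image (𝟙 Z - p₁ ≫ i₁ - p₂ ≫ i₂) ⊞ A') ≅ Z := by
  set e := 𝟙 Z - p₁ ≫ i₁ - p₂ ≫ i₂ with he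
  have fac : factorThruImage e ≫ image.ι e = e := image.fac e
  have i₁_e : i₁ ≫ e = 0 := by simp [e, Preadditive.comp_sub, reassoc_of% h₁₁, reassoc_of% h₁₂]
  have i₂_e : i₂ ≫ e = 0 := by simp [e, Preadditive.comp_sub, reassoc_of% h₂₁, reassoc_of% h₂₂]
  have e_p₁ : e ≫ p₁ = 0 := by simp [e, Preadditive.sub_comp, h₁₁, h₂₁]
  have e_p₂ : e ≫ p₂ = 0 := by simp [e, Preadditive.sub_comp, h₁₂, h₂₂]
  have i₁_π : i₁ ≫ factorThruImage e = 0 :=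
    (cancel_mono (image.ι e)).mp (by simp [fac, i₁_e])
  have i₂_π : i₂ ≫ factorThruImage e = 0 :=
    (cancel_mono (image.ι e)).mp (by simp [fac, i₂_e])
  have ι_p₁ : image.ι e ≫ p₁ = 0 :=
    (cancel_epi (factorThruImage e)).mp (by simp [reassoc_of% fac, e_p₁])
  have ι_p₂ : image.ι e ≫ p₂ = 0 :=
    (cancel_epi (factorThruImage e)).mp (by simp [reassoc_of% fac, e_p₂])
  have ι_π : image.ι e ≫ factorThruImage e = 𝟙 _ := by
    refine (cancel_mono (image.ι e)).mp ?_
    simp [fac, e, Preadditive.comp_sub, reassoc_of% ι_p₁, reassoc_of% ι_p₂]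
  refine ⟨biprod.desc i₁ (biprod.desc (image.ι e) i₂),
    biprod.lift p₁ (biprod.lift (factorThruImage e) p₂), ?_, ?_⟩
  · ext <;> simp [h₁₁, h₁₂, h₂₁, h₂₂, i₁_π, i₂_π, ι_p₁, ι_p₂, ι_π, -image.fac_assoc]
  · rw [biprod.lift_desc, biprod.lift_desc, fac, he]
    abel

end ComplementaryIdempotent

/-- For a quadratic functor `F` from a preadditive category with binary biproducts to an
abelian category, `F(X) ⊕ F(X|Y) ⊕ F(Y) ≅ F(X ⊕ Y)`, where the quadratic crossed effect
`F(X|Y)` is the image of the endomorphism `[i₁p₁, i₂p₂]` of `F(X ⊕ Y)`. -/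
theorem stmt_5 {C : Type*} [Category C] [Preadditive C] [HasBinaryBiproducts C]
    {B : Type*} [Category B] [Abelian B]
    (F : C ⥤ B) (hF : IsQuadraticFunctor F) (X Y : C) :
    Nonempty (F.obj X ⊞ (image (crossedDeviation F X Y) ⊞ F.obj Y) ≅ F.obj (X ⊞ Y)) := by
  have := hF.preservesZeroMorphisms
  have hdev : crossedDeviation F X Y = 𝟙 _ - F.map biprod.fst ≫ F.map biprod.inl
      - F.map biprod.snd ≫ F.map biprod.inr := by
    simp only [crossedDeviation, biprod.total, F.map_id, F.map_comp]
  rw [hdev]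
  exact ⟨biprodImageComplementIso _ _ _ _ (by simp [← F.map_comp]) (by simp [← F.map_comp])
    (by simp [← F.map_comp]) (by simp [← F.map_comp])⟩
end

section
/- Let C be a preadditive category with binary biproducts, B an abelian category, and F : C → B a quadratic functor. For objects X, Y of C with biproduct inclusions i₁, i₂ and projections p₁, p₂ of X ⊕ Y, set [i₁p₁, i₂p₂] := F(i₁p₁ + i₂p₂) − F(i₁p₁) − F(i₂p₂). Then the following are equivalent: (a) [i₁p₁, i₂p₂] = 0 for all objects X, Y (equivalently, all quadratic crossed effects F(X|Y) vanish); (b) F is additive, i.e. F(f+g) = F(f) + F(g) for all parallel morphisms f, g in C. -/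
open CategoryTheory CategoryTheory.Limits

/-- A quadratic functor is additive iff all its crossed deviations `[i₁p₁, i₂p₂]`
(equivalently, all its quadratic crossed effects) vanish. -/
theorem stmt_6 {C : Type*} [Category C] [Preadditive C] [HasBinaryBiproducts C]
    {B : Type*} [Category B] [Abelian B]
    (F : C ⥤ B) (hF : IsQuadraticFunctor F) :
    (∀ X Y : C, crossedDeviation F X Y = 0) ↔
      ∀ ⦃X Y : C⦄ (f g : X ⟶ Y), F.map (f + g) = F.map f + F.map g := by
  constructor
  · intro h X Y f g
    have e1 : biprod.lift (𝟙 X) (𝟙 X) ≫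
        (biprod.fst ≫ biprod.inl + biprod.snd ≫ biprod.inr : X ⊞ X ⟶ X ⊞ X) ≫
        biprod.desc f g = f + g := by
      simp [Preadditive.comp_add, Preadditive.add_comp]
    have e2 : biprod.lift (𝟙 X) (𝟙 X) ≫
        ((biprod.fst : X ⊞ X ⟶ X) ≫ biprod.inl) ≫ biprod.desc f g = f := by simp
    have e3 : biprod.lift (𝟙 X) (𝟙 X) ≫
        ((biprod.snd : X ⊞ X ⟶ X) ≫ biprod.inr) ≫ biprod.desc f g = g := by simp
    have key : F.map (f + g) - F.map f - F.map g =
        F.map (biprod.lift (𝟙 X) (𝟙 X)) ≫ crossedDeviation F X X ≫ F.map (biprod.desc f g) := by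
      rw [crossedDeviation]
      simp only [Preadditive.sub_comp, Preadditive.comp_sub, ← F.map_comp]
      rw [e1, e2, e3]
    rw [h, zero_comp, comp_zero, sub_sub, sub_eq_zero] at key
    rw [key]
  · intro h X Y
    rw [crossedDeviation, h, add_sub_cancel_left, sub_self]
end

section
/- Let C be a preadditive category with binary biproducts and let D : Cᵒᵖ × C → Ab be a functor (a C-bimodule) that is additive in the first variable, i.e. for each object Z the map Hom(X,Y) → Hom(D(Y,Z), D(X,Z)) is additive. A 0-cocycle of C with coefficients in D is a family c assigning to each object A an element c_A ∈ D(A,A) such that D(1,σ)(c_A) = D(σ,1)(c_B) for every morphism σ : A → B. Then every 0-cocycle c is additive: for all objects X, Y, writing i₁, i₂, p₁, p₂ for the biproduct inclusions and projections of X ⊕ Y, one has c_{X⊕Y} = D(p₁,1)(D(1,i₁)(c_X)) + D(p₂,1)(D(1,i₂)(c_Y)) in D(X⊕Y, X⊕Y). -/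
open CategoryTheory CategoryTheory.Limits Opposite

/-!
On `X ⊞ Y` we have `𝟙 = p₁ ≫ i₁ + p₂ ≫ i₂`, so additivity in the first variable splits
`c_{X⊞Y} = 𝟙^* c_{X⊞Y}` into `(p₁ ≫ i₁)^* c_{X⊞Y} + (p₂ ≫ i₂)^* c_{X⊞Y}`; and
`(pₖ ≫ iₖ)^* c_{X⊞Y} = pₖ^* iₖ^* c_{X⊞Y} = pₖ^* (iₖ)_* c` by the cocycle condition for `iₖ`.
-/

section ZeroCocycle

variable {C : Type*} [Category C] (D : (Cᵒᵖ × C) ⥤ AddCommGrpCat)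

def IsZeroCocycle (c : ∀ A : C, D.obj (op A, A)) : Prop :=
  ∀ (A B : C) (σ : A ⟶ B),
    D.map ((𝟙 (op A), σ) : (op A, A) ⟶ (op A, B)) (c A) =
      D.map ((σ.op, 𝟙 B) : (op B, B) ⟶ (op A, B)) (c B)

variable {D}

lemma map_comp_op_id_apply {A B Z : C} (f : A ⟶ B) (g : B ⟶ A) (x : D.obj (op A, Z)) :
    D.map (((f ≫ g).op, 𝟙 Z) : (op A, Z) ⟶ (op A, Z)) x =
      D.map ((f.op, 𝟙 Z) : (op B, Z) ⟶ (op A, Z))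
        (D.map ((g.op, 𝟙 Z) : (op A, Z) ⟶ (op B, Z)) x) := by
  rw [← ConcreteCategory.comp_apply, ← D.map_comp, prod_comp, Category.comp_id]
  rfl

lemma IsZeroCocycle.map_comp_op_id_eq {c : ∀ A : C, D.obj (op A, A)}
    (hc : IsZeroCocycle D c) {A B : C} (p : B ⟶ A) (i : A ⟶ B) :
    D.map (((p ≫ i).op, 𝟙 B) : (op B, B) ⟶ (op B, B)) (c B) =
      D.map ((p.op, 𝟙 B) : (op A, B) ⟶ (op B, B))
        (D.map ((𝟙 (op A), i) : (op A, A) ⟶ (op A, B)) (c A)) := by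
  rw [map_comp_op_id_apply, hc]

lemma map_id_id_apply {A Z : C} (x : D.obj (op A, Z)) :
    D.map ((𝟙 (op A), 𝟙 Z) : (op A, Z) ⟶ (op A, Z)) x = x :=
  ConcreteCategory.congr_hom (D.map_id (op A, Z)) x

variable [Preadditive C]

variable (D) in
def IsAdditiveInFirstVariable : Prop :=
  ∀ (X Y Z : C) (f g : X ⟶ Y),
    D.map (((f + g).op, 𝟙 Z) : (op Y, Z) ⟶ (op X, Z)) =
      D.map ((f.op, 𝟙 Z) : (op Y, Z) ⟶ (op X, Z)) +
      D.map ((g.op, 𝟙 Z) : (op Y, Z) ⟶ (op X, Z))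

lemma IsAdditiveInFirstVariable.map_op_id_add_apply (hadd : IsAdditiveInFirstVariable D)
    {X Y Z : C} (f g : X ⟶ Y) (x : D.obj (op Y, Z)) :
    D.map (((f + g).op, 𝟙 Z) : (op Y, Z) ⟶ (op X, Z)) x =
      D.map ((f.op, 𝟙 Z) : (op Y, Z) ⟶ (op X, Z)) x +
        D.map ((g.op, 𝟙 Z) : (op Y, Z) ⟶ (op X, Z)) x := by
  rw [hadd, AddCommGrpCat.hom_add_apply]

end ZeroCocycle

/-- Every `0`-cocycle of a preadditive category with binary biproducts, with coefficients
in a bimodule `D : Cᵒᵖ × C ⥤ Ab` which is additive in the first variable, is additive: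
`c_{X⊕Y} = p₁^*(i₁)_*(c_X) + p₂^*(i₂)_*(c_Y)`. -/
theorem stmt_7 {C : Type*} [Category C] [Preadditive C] [HasBinaryBiproducts C]
    (D : (Cᵒᵖ × C) ⥤ AddCommGrpCat)
    (hadd : ∀ (X Y Z : C) (f g : X ⟶ Y),
      D.map ((((f + g).op, 𝟙 Z)) : (Opposite.op Y, Z) ⟶ (Opposite.op X, Z)) =
        D.map ((f.op, 𝟙 Z) : (Opposite.op Y, Z) ⟶ (Opposite.op X, Z)) +
        D.map ((g.op, 𝟙 Z) : (Opposite.op Y, Z) ⟶ (Opposite.op X, Z)))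
    (c : ∀ A : C, D.obj (Opposite.op A, A))
    (hc : ∀ (A B : C) (σ : A ⟶ B),
      D.map ((𝟙 (Opposite.op A), σ) : (Opposite.op A, A) ⟶ (Opposite.op A, B)) (c A) =
        D.map ((σ.op, 𝟙 B) : (Opposite.op B, B) ⟶ (Opposite.op A, B)) (c B))
    (X Y : C) :
    c (X ⊞ Y) =
      D.map (((biprod.fst : X ⊞ Y ⟶ X).op, 𝟙 (X ⊞ Y)) :
          (Opposite.op X, X ⊞ Y) ⟶ (Opposite.op (X ⊞ Y), X ⊞ Y))
        (D.map ((𝟙 (Opposite.op X), (biprod.inl : X ⟶ X ⊞ Y)) :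
          (Opposite.op X, X) ⟶ (Opposite.op X, X ⊞ Y)) (c X)) +
      D.map (((biprod.snd : X ⊞ Y ⟶ Y).op, 𝟙 (X ⊞ Y)) :
          (Opposite.op Y, X ⊞ Y) ⟶ (Opposite.op (X ⊞ Y), X ⊞ Y))
        (D.map ((𝟙 (Opposite.op Y), (biprod.inr : Y ⟶ X ⊞ Y)) :
          (Opposite.op Y, Y) ⟶ (Opposite.op Y, X ⊞ Y)) (c Y)) := by
  have hadd : IsAdditiveInFirstVariable D := hadd
  have hc : IsZeroCocycle D c := hc
  calc c (X ⊞ Y)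
      = D.map (((biprod.fst ≫ biprod.inl + biprod.snd ≫ biprod.inr : X ⊞ Y ⟶ X ⊞ Y).op,
          𝟙 (X ⊞ Y)) : (op (X ⊞ Y), X ⊞ Y) ⟶ _) (c (X ⊞ Y)) := by
        rw [biprod.total, op_id, map_id_id_apply]
    _ = _ := by
        rw [hadd.map_op_id_add_apply, hc.map_comp_op_id_eq, hc.map_comp_op_id_eq]
end

section
/- Let k = F₂ and V₀ = k³ with basis x, y, z. Define the subspaces V₁ = span{x,y}, V₂ = span{x,z}, V₃ = span{y,z}, V₄ = span{x+y, z}, V₅ = span{x+z, y}, V₆ = span{x, y+z}, V₇ = span{x+y, x+z} of V₀. Let ⊗̂²V₀ be the quotient of V₀ ⊗ V₀ by the subspace spanned by all a⊗b + b⊗a (a, b ∈ V₀), write a⊗̂b for the class of a⊗b, and for each i let ⊗̂²V_i ⊆ ⊗̂²V₀ denote the image of V_i ⊗ V_i. Then there is no k-linear map s : ⊗̂²V₀ → V₀ such that s(a⊗̂a) = a for all a ∈ V₀ and s(⊗̂²V_i) ⊆ V_i for all i = 1, …, 7. -/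
open scoped TensorProduct

noncomputable section

/-- The field with two elements. -/
abbrev F2 := ZMod 2

/-- The `F₂`-vector space `V₀ = F₂³` with basis `x, y, z`. -/
abbrev V3 := Fin 3 → F2

/-- The basis vector `x`. -/
def xv : V3 := ![1, 0, 0]

/-- The basis vector `y`. -/
def yv : V3 := ![0, 1, 0]

/-- The basis vector `z`. -/
def zv : V3 := ![0, 0, 1]

/-- The subspace of `V₀ ⊗ V₀` spanned by the elements `a ⊗ b + b ⊗ a`. -/
def symRel : Submodule F2 (TensorProduct F2 V3 V3) :=
  Submodule.span F2 {w | ∃ a b : V3, w = a ⊗ₜ[F2] b + b ⊗ₜ[F2] a}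

/-- The reduced tensor square `⊗̂²V₀ = (V₀ ⊗ V₀)/⟨a ⊗ b + b ⊗ a⟩`. -/
abbrev RedSq := TensorProduct F2 V3 V3 ⧸ symRel

/-- The image `⊗̂²W ⊆ ⊗̂²V₀` of `W ⊗ W` for a subspace `W ⊆ V₀`. -/
def redSqSub (W : Submodule F2 V3) : Submodule F2 RedSq :=
  Submodule.map symRel.mkQ
    (Submodule.span F2 {w | ∃ a ∈ W, ∃ b ∈ W, w = a ⊗ₜ[F2] b})

/-- The seven distinguished planes `V₁, …, V₇` of `V₀`. -/
def subs : Fin 7 → Submodule F2 V3 :=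
  ![Submodule.span F2 {xv, yv}, Submodule.span F2 {xv, zv}, Submodule.span F2 {yv, zv},
    Submodule.span F2 {xv + yv, zv}, Submodule.span F2 {xv + zv, yv},
    Submodule.span F2 {xv, yv + zv}, Submodule.span F2 {xv + yv, xv + zv}]

lemma mkQ_comm (a b : V3) : symRel.mkQ (a ⊗ₜ[F2] b) = symRel.mkQ (b ⊗ₜ[F2] a) := by
  have h2 : ∀ u : TensorProduct F2 V3 V3, -u = u := by
    intro u
    have : u + u = 0 := by
      rw [← two_smul F2 u, show (2 : F2) = 0 from rfl, zero_smul]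
    exact neg_eq_of_add_eq_zero_left this
  rw [Submodule.mkQ_apply, Submodule.mkQ_apply, Submodule.Quotient.eq,
    sub_eq_add_neg, h2]
  exact Submodule.subset_span ⟨a, b, rfl⟩

lemma mem_redSqSub {W : Submodule F2 V3} {a b : V3} (ha : a ∈ W) (hb : b ∈ W) :
    symRel.mkQ (a ⊗ₜ[F2] b) ∈ redSqSub W :=
  Submodule.mem_map_of_mem (Submodule.subset_span ⟨a, ha, b, hb, rfl⟩)

/-- There is no `F₂`-linear map `s : ⊗̂²V₀ → V₀` with `s(a ⊗̂ a) = a` for all `a` which maps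
`⊗̂²Vᵢ` into `Vᵢ` for each of the seven planes `V₁, …, V₇`. -/
theorem stmt_10 :
    ¬ ∃ s : RedSq →ₗ[F2] V3,
        (∀ a : V3, s (symRel.mkQ (a ⊗ₜ[F2] a)) = a) ∧
        (∀ i : Fin 7, Submodule.map s (redSqSub (subs i)) ≤ subs i) := by
  rintro ⟨s, hs, hmap⟩
  have key : ∀ (i : Fin 7) (a b : V3), a ∈ subs i → b ∈ subs i →
      s (symRel.mkQ (a ⊗ₜ[F2] b)) ∈ subs i := fun i a b ha hb =>
    hmap i ⟨_, mem_redSqSub ha hb, rfl⟩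
  have m1 : ∀ a b : V3, a ∈ ({a, b} : Set V3) := fun a b => Set.mem_insert _ _
  have m2 : ∀ a b : V3, b ∈ ({a, b} : Set V3) := fun a b =>
    Set.mem_insert_of_mem _ rfl
  have hP : s (symRel.mkQ (xv ⊗ₜ[F2] yv)) ∈ Submodule.span F2 {xv, yv} :=
    key 0 _ _ (Submodule.subset_span (m1 _ _)) (Submodule.subset_span (m2 _ _))
  have hQ : s (symRel.mkQ (xv ⊗ₜ[F2] zv)) ∈ Submodule.span F2 {xv, zv} :=
    key 1 _ _ (Submodule.subset_span (m1 _ _)) (Submodule.subset_span (m2 _ _))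
  have hR : s (symRel.mkQ (yv ⊗ₜ[F2] zv)) ∈ Submodule.span F2 {yv, zv} :=
    key 2 _ _ (Submodule.subset_span (m1 _ _)) (Submodule.subset_span (m2 _ _))
  have h4 : s (symRel.mkQ ((xv + yv) ⊗ₜ[F2] zv)) ∈ Submodule.span F2 {xv + yv, zv} :=
    key 3 _ _ (Submodule.subset_span (m1 _ _)) (Submodule.subset_span (m2 _ _))
  have h5 : s (symRel.mkQ ((xv + zv) ⊗ₜ[F2] yv)) ∈ Submodule.span F2 {xv + zv, yv} :=
    key 4 _ _ (Submodule.subset_span (m1 _ _)) (Submodule.subset_span (m2 _ _))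
  have h6 : s (symRel.mkQ (xv ⊗ₜ[F2] (yv + zv))) ∈ Submodule.span F2 {xv, yv + zv} :=
    key 5 _ _ (Submodule.subset_span (m1 _ _)) (Submodule.subset_span (m2 _ _))
  have h7 : s (symRel.mkQ ((xv + yv) ⊗ₜ[F2] (xv + zv))) ∈
      Submodule.span F2 {xv + yv, xv + zv} :=
    key 6 _ _ (Submodule.subset_span (m1 _ _)) (Submodule.subset_span (m2 _ _))
  -- expand the sums
  rw [TensorProduct.add_tmul, map_add, map_add] at h4
  rw [TensorProduct.add_tmul, map_add, map_add, mkQ_comm zv yv] at h5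
  rw [TensorProduct.tmul_add, map_add, map_add] at h6
  rw [TensorProduct.add_tmul, TensorProduct.tmul_add, TensorProduct.tmul_add,
    map_add, map_add, map_add, map_add, map_add, map_add, mkQ_comm yv xv,
    hs xv] at h7
  set P := s (symRel.mkQ (xv ⊗ₜ[F2] yv)) with hPdef
  set Q := s (symRel.mkQ (xv ⊗ₜ[F2] zv)) with hQdef
  set R := s (symRel.mkQ (yv ⊗ₜ[F2] zv)) with hRdef
  rw [Submodule.mem_span_pair] at hP hQ hR h4 h5 h6 h7
  obtain ⟨a1, a2, e1⟩ := hP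
  obtain ⟨b1, b2, e2⟩ := hQ
  obtain ⟨c1, c2, e3⟩ := hR
  obtain ⟨d1, d2, e4⟩ := h4
  obtain ⟨f1, f2, e5⟩ := h5
  obtain ⟨g1, g2, e6⟩ := h6
  obtain ⟨k1, k2, e7⟩ := h7
  rw [← e1] at e5 e6 e7
  rw [← e2] at e4 e6 e7
  rw [← e3] at e4 e5 e7
  have p1 := congrFun e4 0
  have p2 := congrFun e4 1
  have p3 := congrFun e5 0
  have p4 := congrFun e5 1
  have p5 := congrFun e6 1
  have p6 := congrFun e6 2
  have p7 := congrFun e7 0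
  have p8 := congrFun e7 1
  have p9 := congrFun e7 2
  have p10 := congrFun e5 2
  simp only [Pi.add_apply, Pi.smul_apply, smul_eq_mul, xv, yv, zv,
    Matrix.cons_val_zero, Matrix.cons_val_one, Matrix.head_cons,
    Matrix.cons_val_two, Matrix.tail_cons, mul_one, mul_zero, add_zero,
    zero_add, mul_add] at p1 p2 p3 p4 p5 p6 p7 p8 p9 p10
  have h1 : b1 = c1 := by rw [← p1, p2]
  have h2 : a2 = b2 := by rw [← p5, p6]
  have h3 : a1 = c2 := by rw [← p3, p10]
  rw [p8, p9] at p7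
  clear e1 e2 e3 e4 e5 e6 e7 p1 p2 p3 p4 p5 p6 p8 p9 p10
  revert p7 h1 h2 h3
  revert a1 a2 b1 b2 c1 c2
  decide


end
end

section
/- Let A be an abelian group and let ⊗̂²A denote the quotient of A ⊗_ℤ A by the subgroup generated by all elements a⊗b + b⊗a. The projection A → A/2A induces a surjective homomorphism ⊗̂²A → ⊗̂²(A/2A) whose kernel is 2·(⊗̂²A); consequently there is an isomorphism (⊗̂²A) ⊗ ℤ/2 ≅ ⊗̂²(A/2A). -/
open scoped TensorProduct

noncomputable section

/-- The reduced tensor square `⊗̂²A = (A ⊗ A)/⟨a ⊗ b + b ⊗ a⟩` of an abelian group `A`. -/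
abbrev redSq (A : Type*) [AddCommGroup A] :=
  TensorProduct ℤ A A ⧸ symSub A

/-! The projection `π : A → A/2A` induces `π ⊗ π` on `A ⊗ A`, which is onto and carries the
relations `a ⊗ b + b ⊗ a` of `A` onto those of `A/2A`; so it descends to a surjection of reduced
tensor squares, whose kernel is the image of `ker (π ⊗ π)`. By right-exactness of `⊗`, this
kernel is generated by `2A ⊗ A` and `A ⊗ 2A`, hence lies in `2(A ⊗ A)`. Thus the kernel is
`2·⊗̂²A`, and `(⊗̂²A) ⊗ ℤ/2 ≅ ⊗̂²A / 2·⊗̂²A ≅ ⊗̂²(A/2A)`. -/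

section TwoSub

variable {B C : Type*} [AddCommGroup B] [AddCommGroup C]

theorem mem_twoSub_iff {x : B} : x ∈ twoSub B ↔ ∃ y, x = y + y := by
  refine ⟨fun hx => ?_, fun ⟨y, hy⟩ => AddSubgroup.subset_closure ⟨y, hy⟩⟩
  induction hx using AddSubgroup.closure_induction with
  | mem x hx => exact hx
  | zero => exact ⟨0, (add_zero 0).symm⟩
  | add x y _ _ hx hy =>
    obtain ⟨a, rfl⟩ := hx
    obtain ⟨b, rfl⟩ := hy
    exact ⟨a + b, by abel⟩
  | neg x _ hx =>
    obtain ⟨a, rfl⟩ := hx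
    exact ⟨-a, by abel⟩

theorem twoSub_le_comap (f : B →+ C) : twoSub B ≤ (twoSub C).comap f :=
  AddSubgroup.closure_le _ |>.2 fun _ ⟨a, ha⟩ => mem_twoSub_iff.2 ⟨f a, by rw [ha, map_add]⟩

theorem twoSub_le_ker_s14 (f : B →+ C) (hC : ∀ c : C, c + c = 0) : twoSub B ≤ f.ker :=
  AddSubgroup.closure_le _ |>.2 fun _ ⟨a, ha⟩ => by
    rw [SetLike.mem_coe, AddMonoidHom.mem_ker, ha, map_add, hC]

theorem QuotientAddGroup.add_self_eq_zero_twoSub (x : B ⧸ twoSub B) : x + x = 0 := by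
  induction x using QuotientAddGroup.induction_on with
  | H a => exact (QuotientAddGroup.eq_zero_iff _).2 (mem_twoSub_iff.2 ⟨a, rfl⟩)

theorem TensorProduct.add_self_eq_zero {M : Type*} [AddCommGroup M] (hC : ∀ c : C, c + c = 0)
    (t : M ⊗[ℤ] C) : t + t = 0 := by
  induction t using TensorProduct.induction_on with
  | zero => exact add_zero 0
  | tmul m c => rw [← TensorProduct.tmul_add, hC, TensorProduct.tmul_zero]
  | add s t hs ht => rw [add_add_add_comm, hs, ht, add_zero]

end TwoSub

section ZModTwo

variable (B : Type*) [AddCommGroup B]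

theorem span_two_smul_top_toAddSubgroup :
    (Ideal.span {(2 : ℤ)} • ⊤ : Submodule ℤ B).toAddSubgroup = twoSub B := by
  ext x
  rw [Submodule.mem_toAddSubgroup, Submodule.ideal_span_singleton_smul,
    Submodule.mem_smul_pointwise_iff_exists, mem_twoSub_iff]
  simp [two_zsmul, eq_comm]

def tensorZModTwoEquiv : B ⊗[ℤ] ZMod 2 ≃+ B ⧸ twoSub B :=
  ((TensorProduct.congr (LinearEquiv.refl ℤ B)
    (Int.quotientSpanNatEquivZMod 2).toAddEquiv.toIntLinearEquiv.symm).trans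
    (TensorProduct.tensorQuotEquivQuotSMul B _)).toAddEquiv.trans
    (QuotientAddGroup.quotientAddEquivOfEq (span_two_smul_top_toAddSubgroup B))

end ZModTwo

section RedSq

variable {B C : Type*} [AddCommGroup B] [AddCommGroup C]

abbrev tensorSq (f : B →+ C) : B ⊗[ℤ] B →+ C ⊗[ℤ] C :=
  (TensorProduct.map f.toIntLinearMap f.toIntLinearMap).toAddMonoidHom

theorem symSub_le_comap (f : B →+ C) : symSub B ≤ (symSub C).comap (tensorSq f) :=
  AddSubgroup.closure_le _ |>.2 fun _ ⟨a, b, h⟩ =>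
    AddSubgroup.subset_closure ⟨f a, f b, by simp [h]⟩

theorem map_symSub_of_surjective {f : B →+ C} (hf : Function.Surjective f) :
    (symSub B).map (tensorSq f) = symSub C := by
  refine le_antisymm (AddSubgroup.map_le_iff_le_comap.2 (symSub_le_comap f))
    (AddSubgroup.closure_le _ |>.2 ?_)
  rintro _ ⟨x, y, rfl⟩
  obtain ⟨a, rfl⟩ := hf x
  obtain ⟨b, rfl⟩ := hf y
  exact ⟨_, AddSubgroup.subset_closure ⟨a, b, rfl⟩, by simp⟩

def redSqMap (f : B →+ C) : redSq B →+ redSq C :=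
  QuotientAddGroup.map _ _ (tensorSq f) (symSub_le_comap f)

theorem redSqMap_surjective {f : B →+ C} (hf : Function.Surjective f) :
    Function.Surjective (redSqMap f) := by
  have hff : Function.Surjective (tensorSq f) :=
    TensorProduct.map_surjective (g := f.toIntLinearMap) (g' := f.toIntLinearMap) hf hf
  exact QuotientAddGroup.map_surjective_of_surjective _ _ _
    (QuotientAddGroup.mk_surjective.comp hff) (symSub_le_comap f)

theorem redSq_add_self_eq_zero (hB : ∀ b : B, b + b = 0) (z : redSq B) : z + z = 0 := by
  induction z using QuotientAddGroup.induction_on with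
  | H t =>
    rw [← QuotientAddGroup.mk_add, TensorProduct.add_self_eq_zero hB, QuotientAddGroup.mk_zero]

end RedSq

section Kernel

variable {B B' C C' : Type*} [AddCommGroup B] [AddCommGroup B'] [AddCommGroup C] [AddCommGroup C']

theorem tmul_mem_twoSub_left {a : B} (ha : a ∈ twoSub B) (b : B') :
    a ⊗ₜ[ℤ] b ∈ twoSub (B ⊗[ℤ] B') :=
  twoSub_le_comap ((TensorProduct.mk ℤ B B').flip b).toAddMonoidHom ha

theorem tmul_mem_twoSub_right (a : B) {b : B'} (hb : b ∈ twoSub B') :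
    a ⊗ₜ[ℤ] b ∈ twoSub (B ⊗[ℤ] B') :=
  twoSub_le_comap (TensorProduct.mk ℤ B B' a).toAddMonoidHom hb

theorem AddMonoidHom.exact_subtype_ker (g : B →+ C) :
    Function.Exact g.ker.subtype.toIntLinearMap g.toIntLinearMap := fun y => by
  simp

theorem ker_tensorMap_le_twoSub {g : B →+ C} {g' : B' →+ C'} (hg : Function.Surjective g)
    (hg' : Function.Surjective g') (hker : g.ker ≤ twoSub B) (hker' : g'.ker ≤ twoSub B') :
    (TensorProduct.map g.toIntLinearMap g'.toIntLinearMap).toAddMonoidHom.ker ≤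
      twoSub (B ⊗[ℤ] B') := by
  intro t ht
  rw [AddMonoidHom.mem_ker, LinearMap.toAddMonoidHom_coe, ← LinearMap.mem_ker,
    TensorProduct.map_ker g.exact_subtype_ker hg g'.exact_subtype_ker hg'] at ht
  refine (sup_le ?_ ?_ : _ ≤ (twoSub (B ⊗[ℤ] B')).toIntSubmodule) ht
  · rintro _ ⟨u, rfl⟩
    induction u using TensorProduct.induction_on with
    | zero => exact zero_mem _
    | tmul b k => exact tmul_mem_twoSub_right b (hker' k.2)
    | add u v hu hv => rw [map_add]; exact add_mem hu hv
  · rintro _ ⟨u, rfl⟩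
    induction u using TensorProduct.induction_on with
    | zero => exact zero_mem _
    | tmul k b => exact tmul_mem_twoSub_left (hker k.2) b
    | add u v hu hv => rw [map_add]; exact add_mem hu hv

end Kernel

theorem ker_redSqMap_mk' (A : Type*) [AddCommGroup A] :
    (redSqMap (QuotientAddGroup.mk' (twoSub A))).ker = twoSub (redSq A) := by
  have hπ := QuotientAddGroup.mk'_surjective (twoSub A)
  refine le_antisymm ?_ (twoSub_le_ker_s14 _ (redSq_add_self_eq_zero
    QuotientAddGroup.add_self_eq_zero_twoSub))
  rw [redSqMap, QuotientAddGroup.ker_map, ← map_symSub_of_surjective hπ,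
    AddSubgroup.comap_map_eq, AddSubgroup.map_le_iff_le_comap]
  have hker := (QuotientAddGroup.ker_mk' (twoSub A)).le
  exact sup_le ((QuotientAddGroup.ker_mk' _).ge.trans (AddSubgroup.ker_le_comap _ _))
    ((ker_tensorMap_le_twoSub hπ hπ hker hker).trans (twoSub_le_comap _))

/-- The projection `A → A/2A` induces a surjection `⊗̂²A → ⊗̂²(A/2A)` with kernel `2·⊗̂²A`;
consequently `(⊗̂²A) ⊗ ℤ/2 ≅ ⊗̂²(A/2A)`. -/
theorem stmt_14 {A : Type*} [AddCommGroup A] :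
    ∃ φ : redSq A →+ redSq (A ⧸ twoSub A),
      (∀ a b : A,
        φ (QuotientAddGroup.mk (a ⊗ₜ[ℤ] b)) =
          QuotientAddGroup.mk ((QuotientAddGroup.mk a : A ⧸ twoSub A) ⊗ₜ[ℤ]
            (QuotientAddGroup.mk b : A ⧸ twoSub A))) ∧
      Function.Surjective φ ∧
      (∀ x : redSq A, φ x = 0 ↔ ∃ y : redSq A, x = y + y) ∧
      Nonempty (TensorProduct ℤ (redSq A) (ZMod 2) ≃+ redSq (A ⧸ twoSub A)) := by
  have hφ := redSqMap_surjective (QuotientAddGroup.mk'_surjective (twoSub A))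
  refine ⟨_, fun a b => rfl, hφ, fun x => ?_, ⟨?_⟩⟩
  · rw [← AddMonoidHom.mem_ker, ker_redSqMap_mk', mem_twoSub_iff]
  · exact (tensorZModTwoEquiv _).trans <|
      (QuotientAddGroup.quotientAddEquivOfEq (ker_redSqMap_mk' A).symm).trans
        (QuotientAddGroup.quotientKerEquivOfSurjective _ hφ)

end
end
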